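/- arXiv:2312.10662 — 2 statements merged into one kernel-verified Lean document; each statement's English description precedes it below -/
import Mathlib

section
/- Hence F_μ is an intertwining operator: F_μ is a homomorphism of U_q(sl₂)-modules from M(μ+1) to M(μ) ⊗ V₁. -/
open TensorProduct

noncomputable section

variable (F : Type) [Field F]

/-- Underlying space of a Verma module `M(μ)`: formal span of basis `v_i`, `i : ℕ`. -/
abbrev MM := ℕ →₀ F

/-- Underlying space of the 2-dimensional irreducible module `V₁`: basis `w₀, w₁`. -/
abbrev V := Fin 2 →₀ F

/-- Basis vector `v_i` of a Verma module. -/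
def vv (i : ℕ) : MM F := Finsupp.single i 1

/-- Basis vector `w_j` of `V₁`. -/
def ww (j : Fin 2) : V F := Finsupp.single j 1

/-- Linear map out of a Verma module defined on the basis. -/
def mkM {W : Type} [AddCommGroup W] [Module F W] (f : ℕ → W) : MM F →ₗ[F] W :=
  Finsupp.lift W F ℕ f

/-- Linear map out of `V₁` defined on the basis. -/
def mkV {W : Type} [AddCommGroup W] [Module F W] (f : Fin 2 → W) : V F →ₗ[F] W :=
  Finsupp.lift W F (Fin 2) f

/-- Quantum bracket: if `x = q^k` then `qb q x = [k] = (q^k - q^(-k))/(q - q⁻¹)`. -/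
def qb {G : Type} [Field G] (q x : G) : G := (x - x⁻¹) / (q - q⁻¹)

variable (q qm : F)

/- Actions on the Verma module `M(μ)`, where `qm` plays the role of `q^μ`. -/

/-- `K · v_i = q^(μ-2i) v_i`. -/
def KM : MM F →ₗ[F] MM F := mkM F fun i => (qm * (q⁻¹) ^ (2 * i)) • vv F i

/-- `K⁻¹ · v_i = q^(-μ+2i) v_i`. -/
def KMinv : MM F →ₗ[F] MM F := mkM F fun i => (qm⁻¹ * q ^ (2 * i)) • vv F i

/-- `E · v_i = [i] v_(i-1)`. -/
def EM : MM F →ₗ[F] MM F := mkM F fun i => qb q (q ^ i) • vv F (i - 1)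

/-- `F · v_i = [μ-i] v_(i+1)`. -/
def FM : MM F →ₗ[F] MM F := mkM F fun i => qb q (qm * (q⁻¹) ^ i) • vv F (i + 1)

/- Actions on `V₁`. -/

/-- `K · w_j = q^(1-2j) w_j`. -/
def KV : V F →ₗ[F] V F := mkV F fun j => (if j = 0 then q else q⁻¹) • ww F j

/-- `K⁻¹ · w_j = q^(2j-1) w_j`. -/
def KVinv : V F →ₗ[F] V F := mkV F fun j => (if j = 0 then q⁻¹ else q) • ww F j

/-- `E · w₀ = 0`, `E · w₁ = w₀`. -/
def EV : V F →ₗ[F] V F := mkV F fun j => if j = 0 then 0 else ww F 0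

/-- `F · w₀ = w₁`, `F · w₁ = 0`. -/
def FV : V F →ₗ[F] V F := mkV F fun j => if j = 0 then ww F 1 else 0

/- Coproduct actions on `M(μ) ⊗ V₁`:
`Δ(K) = K ⊗ K`, `Δ(E) = E ⊗ K + 1 ⊗ E`, `Δ(F) = F ⊗ 1 + K⁻¹ ⊗ F`. -/

def KT : MM F ⊗[F] V F →ₗ[F] MM F ⊗[F] V F := TensorProduct.map (KM F q qm) (KV F q)

def KTinv : MM F ⊗[F] V F →ₗ[F] MM F ⊗[F] V F :=
  TensorProduct.map (KMinv F q qm) (KVinv F q)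

def ET : MM F ⊗[F] V F →ₗ[F] MM F ⊗[F] V F :=
  TensorProduct.map (EM F q) (KV F q) + TensorProduct.map LinearMap.id (EV F)

def FT : MM F ⊗[F] V F →ₗ[F] MM F ⊗[F] V F :=
  TensorProduct.map (FM F q qm) LinearMap.id + TensorProduct.map (KMinv F q qm) (FV F)

/- Coproduct actions on `V₁ ⊗ V₁`. -/

def KVV : V F ⊗[F] V F →ₗ[F] V F ⊗[F] V F := TensorProduct.map (KV F q) (KV F q)

def EVV : V F ⊗[F] V F →ₗ[F] V F ⊗[F] V F :=
  TensorProduct.map (EV F) (KV F q) + TensorProduct.map LinearMap.id (EV F)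

def FVV : V F ⊗[F] V F →ₗ[F] V F ⊗[F] V F :=
  TensorProduct.map (FV F) LinearMap.id + TensorProduct.map (KVinv F q) (FV F)

/-- `E_μ : M(μ) ⊗ V₁ → M(μ+1)`, `E_μ(v_i ⊗ w₀) = q^i v_i`, `E_μ(v_i ⊗ w₁) = v_(i+1)`. -/
def Emap : MM F ⊗[F] V F →ₗ[F] MM F :=
  TensorProduct.lift (mkM F fun i => mkV F fun j =>
    if j = 0 then q ^ i • vv F i else vv F (i + 1))

/-- `F_μ : M(μ+1) → M(μ) ⊗ V₁`,
`F_μ(v_i) = [μ+1-i] v_i ⊗ w₀ + q^(i-μ-1) [i] v_(i-1) ⊗ w₁`. -/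
def Fmap : MM F →ₗ[F] MM F ⊗[F] V F :=
  mkM F fun i =>
    qb q (qm * q * (q⁻¹) ^ i) • (vv F i ⊗ₜ[F] ww F 0) +
    (q ^ i * qm⁻¹ * q⁻¹ * qb q (q ^ i)) • (vv F (i - 1) ⊗ₜ[F] ww F 1)

/-- Evaluation (denoted `cup` in the paper): `ev(w₀⊗w₁) = -q`, `ev(w₁⊗w₀) = 1`,
`ev(w₀⊗w₀) = ev(w₁⊗w₁) = 0`. -/
def ev : V F ⊗[F] V F →ₗ[F] F :=
  TensorProduct.lift (mkV F fun j => mkV F fun j' =>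
    if j = 0 ∧ j' = 1 then -q else if j = 1 ∧ j' = 0 then 1 else 0)

/-- Coevaluation (denoted `cap` in the paper): `1 ↦ w₀⊗w₁ - q⁻¹ w₁⊗w₀`. -/
def coev : F →ₗ[F] V F ⊗[F] V F :=
  LinearMap.toSpanSingleton F _ (ww F 0 ⊗ₜ[F] ww F 1 - q⁻¹ • (ww F 1 ⊗ₜ[F] ww F 0))

/-- `Id_X ⊗ ev : (X ⊗ V₁) ⊗ V₁ → X`. -/
def ev2 (X : Type) [AddCommGroup X] [Module F X] : (X ⊗[F] V F) ⊗[F] V F →ₗ[F] X :=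
  (TensorProduct.rid F X).toLinearMap ∘ₗ LinearMap.lTensor X (ev F q) ∘ₗ
    (TensorProduct.assoc F X (V F) (V F)).toLinearMap

/-- `Id_X ⊗ coev : X → (X ⊗ V₁) ⊗ V₁`. -/
def coev2 (X : Type) [AddCommGroup X] [Module F X] : X →ₗ[F] (X ⊗[F] V F) ⊗[F] V F :=
  (TensorProduct.assoc F X (V F) (V F)).symm.toLinearMap ∘ₗ
    LinearMap.lTensor X (coev F q) ∘ₗ (TensorProduct.rid F X).symm.toLinearMap

/-- `A F n` is (the underlying space of) `M(μ) ⊗ V₁^{⊗ n}`, left associated. -/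
def A : ℕ → ModuleCat F
  | 0 => ModuleCat.of F (MM F)
  | n + 1 => ModuleCat.of F ((A n) ⊗[F] V F)

/-- Extend `f : M(μ') ⊗ V₁ → M(μ'+1)`-type maps by identities on the right:
`ext f k = f ⊗ Id^{⊗ k} : M ⊗ V₁^{⊗(k+1)} → M' ⊗ V₁^{⊗ k}`. -/
def ext (f : A F 1 →ₗ[F] A F 0) : ∀ k, A F (k + 1) →ₗ[F] A F k
  | 0 => f
  | k + 1 => LinearMap.rTensor (V F) (ext f k)

/-- Extend `g : M(μ'+1) → M(μ') ⊗ V₁`-type maps by identities on the right. -/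
def ext' (g : A F 0 →ₗ[F] A F 1) : ∀ k, A F k →ₗ[F] A F (k + 1)
  | 0 => g
  | k + 1 => LinearMap.rTensor (V F) (ext' g k)

/-- Extend a map `A (a+2) → A a` (e.g. `Id ⊗ ev` at the last two positions of `A (a+2)`)
by `k` identities on the right. -/
def cext {a : ℕ} (f : A F (a + 2) →ₗ[F] A F a) : ∀ k, A F (a + 2 + k) →ₗ[F] A F (a + k)
  | 0 => f
  | k + 1 => LinearMap.rTensor (V F) (cext f k)

/-- Extend a map `A a → A (a+2)` (e.g. `Id ⊗ coev`) by `k` identities on the right. -/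
def cext' {a : ℕ} (g : A F a →ₗ[F] A F (a + 2)) : ∀ k, A F (a + k) →ₗ[F] A F (a + 2 + k)
  | 0 => g
  | k + 1 => LinearMap.rTensor (V F) (cext' g k)

/-- The composite `E_{μ+n-1} ∘ E_{μ+n-2,1} ∘ ⋯ ∘ E_{μ,n-1} : M(μ) ⊗ V₁^{⊗n} → M(μ+n)`. -/
def Echain (q : F) : F → ∀ n, A F n →ₗ[F] A F 0
  | _, 0 => LinearMap.id
  | qm, n + 1 => (Echain q (q * qm) n).comp (ext F (Emap F q) n)

/-- The composite `F_{μ,n-1} ∘ F_{μ+1,n-2} ∘ ⋯ ∘ F_{μ+n-1} : M(μ+n) → M(μ) ⊗ V₁^{⊗n}`. -/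
def Fchain (q : F) : F → ∀ n, A F 0 →ₗ[F] A F n
  | _, 0 => LinearMap.id
  | qm, n + 1 => (ext' F (Fmap F q qm) n).comp (Fchain q (q * qm) n)

/-- The scalar `[μ+n][μ+n-1]⋯[μ+1]`. -/
def cf {G : Type} [Field G] (q : G) : G → ℕ → G
  | _, 0 => 1
  | qm, n + 1 => qb q (q * qm) * cf q (q * qm) n

/-- The extended Jones–Wenzl projector
`P_{μ,n} = F_{μ,n-1}⋯F_{μ+n-1} E_{μ+n-1}⋯E_{μ,n-1} / ([μ+n]⋯[μ+1])`. -/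
def P (n : ℕ) : A F n →ₗ[F] A F n :=
  (cf q qm n)⁻¹ • ((Fchain F q qm n).comp (Echain F q qm n))



section Aux

@[simp] lemma mkM_vv {W : Type} [AddCommGroup W] [Module F W] (f : ℕ → W) (i : ℕ) :
    mkM F f (vv F i) = f i := by simp [mkM, vv]

@[simp] lemma mkV_ww {W : Type} [AddCommGroup W] [Module F W] (f : Fin 2 → W) (j : Fin 2) :
    mkV F f (ww F j) = f j := by simp [mkV, ww]

omit [Field F] in
lemma smul_cg {W : Type} [SMul F W] {c c' : F} (x : W)
    (h : c = c') : c • x = c' • x := by rw [h]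

variable {F}

lemma qb_cg {a b : F} (q : F) (h : a = b) : qb q a = qb q b := by rw [h]

@[simp] lemma qb_one (q : F) : qb q 1 = 0 := by simp [qb]

lemma qb_q_mul {q : F} (hd : q - q⁻¹ ≠ 0) (A : F) :
    qb q (q * A) = q * qb q A + A⁻¹ := by
  have h : q * A - (q * A)⁻¹ = q * (A - A⁻¹) + A⁻¹ * (q - q⁻¹) := by
    rw [mul_inv]; ring
  rw [qb, qb, h, add_div, mul_div_assoc, mul_div_cancel_right₀ _ hd]

lemma qb_mul_q {q : F} (hd : q - q⁻¹ ≠ 0) (x : F) :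
    qb q (q * x) = q⁻¹ * qb q x + x := by
  have h : q * x - (q * x)⁻¹ = q⁻¹ * (x - x⁻¹) + x * (q - q⁻¹) := by
    rw [mul_inv]; ring
  rw [qb, qb, h, add_div, mul_div_assoc, mul_div_cancel_right₀ _ hd]

end Aux

set_option maxHeartbeats 1000000 in
/-- `F_μ` is an intertwining operator, i.e. it commutes with the
actions of all generators `K, K⁻¹, E, F` of `U_q(sl₂)`. -/
theorem stmt7 (hq : q ≠ 0) (hqm : qm ≠ 0) :
    (KT F q qm).comp (Fmap F q qm) = (Fmap F q qm).comp (KM F q (q * qm)) ∧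
    (KTinv F q qm).comp (Fmap F q qm) = (Fmap F q qm).comp (KMinv F q (q * qm)) ∧
    (ET F q).comp (Fmap F q qm) = (Fmap F q qm).comp (EM F q) ∧
    (FT F q qm).comp (Fmap F q qm) = (Fmap F q qm).comp (FM F q (q * qm)) := by
  refine ⟨?_, ?_, ?_, ?_⟩
  · -- K
    ext i
    show (KT F q qm) (Fmap F q qm (vv F i)) = Fmap F q qm ((KM F q (q*qm)) (vv F i))
    simp [KT, Fmap, KM, KV, TensorProduct.map_tmul, smul_smul,
      TensorProduct.smul_tmul']
    simp only [← TensorProduct.smul_tmul']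
    refine congrArg₂ (· + ·) (smul_cg F _ (by ring)) (smul_cg F _ ?_)
    rcases i with _ | i
    · simp [qb]
    · simp only [Nat.add_sub_cancel]
      field_simp
      ring
  · -- K⁻¹
    ext i
    show (KTinv F q qm) (Fmap F q qm (vv F i)) = Fmap F q qm ((KMinv F q (q*qm)) (vv F i))
    simp [KTinv, Fmap, KMinv, KVinv, TensorProduct.map_tmul, smul_smul,
      TensorProduct.smul_tmul']
    simp only [← TensorProduct.smul_tmul']
    refine congrArg₂ (· + ·) (smul_cg F _ (by ring)) (smul_cg F _ ?_)
    rcases i with _ | i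
    · simp [qb]
    · simp only [Nat.add_sub_cancel]
      field_simp
      ring
  · -- E
    ext i
    show (ET F q) (Fmap F q qm (vv F i)) = Fmap F q qm ((EM F q) (vv F i))
    simp [ET, Fmap, EM, KV, EV, TensorProduct.map_tmul, smul_smul,
      TensorProduct.smul_tmul']
    simp only [← TensorProduct.smul_tmul']
    rw [add_right_comm, ← add_smul]
    refine congrArg₂ (· + ·) (smul_cg F _ ?_) (smul_cg F _ ?_)
    · rcases i with _ | i
      · simp [qb]
      · simp only [Nat.add_sub_cancel]
        by_cases hd : q - q⁻¹ = 0
        · simp [qb, hd]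
        · rw [qb_cg q (show qm * q * (q ^ i)⁻¹ = q * (qm * q * (q ^ (i+1))⁻¹) by
            field_simp; ring), qb_q_mul hd]
          field_simp
    · rcases i with _ | i
      · simp [qb]
      · simp only [Nat.add_sub_cancel]
        rcases i with _ | i
        · simp [qb]
        · field_simp
          ring
  · -- F
    ext i
    show (FT F q qm) (Fmap F q qm (vv F i)) = Fmap F q qm ((FM F q (q*qm)) (vv F i))
    simp [FT, Fmap, FM, KMinv, FV, TensorProduct.map_tmul, smul_smul,
      TensorProduct.smul_tmul']
    simp only [← TensorProduct.smul_tmul']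
    rcases i with _ | i
    · simp only [pow_zero, pow_one, inv_one, mul_one, one_mul, qb_one, mul_zero,
        zero_mul, zero_smul, zero_add, add_zero, Nat.mul_zero]
      refine congrArg₂ (· + ·) (smul_cg F _ ?_) (smul_cg F _ ?_)
      · exact congrArg₂ (· * ·) (qb_cg q (by ring)) (qb_cg q (by field_simp))
      · by_cases hd : q - q⁻¹ = 0
        · simp [qb, hd]
        · have h1 : qb q (q : F) = 1 := by rw [qb]; exact div_self hd
          rw [qb_cg q (show qm * q = q * qm by ring), h1]
          field_simp
    · simp only [Nat.add_sub_cancel]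
      rw [add_assoc, ← add_smul]
      refine congrArg₂ (· + ·) (smul_cg F _ ?_) (smul_cg F _ ?_)
      · refine congrArg₂ (· * ·) (qb_cg q (by ring)) (qb_cg q ?_)
        field_simp
        ring
      · by_cases hd : q - q⁻¹ = 0
        · simp [qb, hd]
        · rw [qb_cg q (show qm * (q ^ i)⁻¹ = q * qm * (q ^ (i+1))⁻¹ by
              field_simp; ring),
            qb_cg q (show qm * q * (q ^ (i+1))⁻¹ = q * qm * (q ^ (i+1))⁻¹ by ring),
            show (q:F) ^ (i+1+1) = q * q ^ (i+1) by ring, qb_mul_q hd]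
          field_simp
          ring


end
end

section
/- With cup_i := Id_{M(μ)} ⊗ Id^{⊗(i−1)} ⊗ ev ⊗ Id^{⊗(n−i−1)} : M(μ)⊗V₁^{⊗n} → M(μ)⊗V₁^{⊗(n−2)} (the evaluation applied at tensor positions i, i+1), the extended Jones–Wenzl projector satisfies cup_i ∘ P_{μ,n} = 0 for all i = 1, …, n−1. -/
open TensorProduct

noncomputable section

variable (F : Type) [Field F]

variable (q qm : F)

lemma ev_ww_ww (a b : Fin 2) :
    ev F q (ww F a ⊗ₜ ww F b) =
      if a = 0 ∧ b = 1 then -q else if a = 1 ∧ b = 0 then 1 else 0 := by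
  simp [ev]

@[simp]
lemma ev2_tmul {X : Type} [AddCommGroup X] [Module F X] (x : X) (v w : V F) :
    ev2 F q X ((x ⊗ₜ v) ⊗ₜ w) = ev F q (v ⊗ₜ w) • x := by
  simp [ev2]

lemma ev2_comp_rTensor_rTensor {X Y : Type} [AddCommGroup X] [Module F X] [AddCommGroup Y]
    [Module F Y] (h : X →ₗ[F] Y) :
    ev2 F q Y ∘ₗ (h.rTensor (V F)).rTensor (V F) = h ∘ₗ ev2 F q X :=
  TensorProduct.ext_threefold fun x v w => by simp

lemma Fmap_vv (i : ℕ) :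
    Fmap F q qm (vv F i) =
      qb q (qm * q * q⁻¹ ^ i) • (vv F i ⊗ₜ ww F 0) +
      (q ^ i * qm⁻¹ * q⁻¹ * qb q (q ^ i)) • (vv F (i - 1) ⊗ₜ ww F 1) :=
  mkM_vv F _ i

theorem ev2_comp_rTensor_Fmap_comp_Fmap :
    ev2 F q (MM F) ∘ₗ (Fmap F q qm).rTensor (V F) ∘ₗ Fmap F q (q * qm) = 0 := by
  ext i : 1
  refine LinearMap.ext_ring ?_
  change ev2 F q (MM F) ((Fmap F q qm).rTensor (V F) (Fmap F q (q * qm) (vv F i))) = 0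
  rcases i with _ | i
  · simp [Fmap_vv, qb, ← TensorProduct.smul_tmul', ev_ww_ww]
  · have hshift : q * qm * q * q⁻¹ ^ (i + 1) = qm * q * q⁻¹ ^ i := by
      rcases eq_or_ne q 0 with rfl | hq
      · simp
      · rw [pow_succ]
        field_simp
    simp only [Fmap_vv, map_add, map_smul, LinearMap.rTensor_tmul, TensorProduct.add_tmul,
      ← TensorProduct.smul_tmul', ev2_tmul, ev_ww_ww, Nat.add_sub_cancel]
    simp only [Fin.isValue, zero_ne_one, and_true, one_ne_zero, and_false, and_self, ite_false,
      ite_true, zero_smul, neg_smul, one_smul, smul_zero, zero_add, add_zero, smul_neg, smul_smul,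
      hshift]
    rw [← sub_eq_add_neg, ← sub_smul]
    convert zero_smul F (vv F i)
    rcases eq_or_ne q 0 with rfl | hq
    · simp
    · field_simp
      ring

theorem Fchain_succ' (n : ℕ) :
    Fchain F q qm (n + 1) = (Fchain F q qm n).rTensor (V F) ∘ₗ Fmap F q (q ^ n * qm) := by
  induction n generalizing qm with
  | zero =>
    rw [pow_zero, one_mul]
    erw [Fchain, LinearMap.rTensor_id]
    rfl
  | succ n ih =>
    change ext' F (Fmap F q qm) (n + 1) ∘ₗ Fchain F q (q * qm) (n + 1) = _
    rw [ih, ← mul_assoc, ← pow_succ]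
    erw [← LinearMap.comp_assoc, ← LinearMap.rTensor_comp]
    rfl

theorem ev2_comp_Fchain (m : ℕ) : ev2 F q (A F m) ∘ₗ Fchain F q qm (m + 2) = 0 := by
  induction m generalizing qm with
  | zero =>
    rw [Fchain_succ', pow_one]
    exact ev2_comp_rTensor_Fmap_comp_Fmap F q qm
  | succ m ih =>
    change ev2 F q (A F (m + 1)) ∘ₗ ((ext' F (Fmap F q qm) m).rTensor (V F)).rTensor (V F) ∘ₗ
      Fchain F q (q * qm) (m + 2) = 0
    erw [← LinearMap.comp_assoc, ev2_comp_rTensor_rTensor, LinearMap.comp_assoc, ih,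
      LinearMap.comp_zero]

theorem cext_comp_Fchain_eq_zero {a : ℕ} (f : A F (a + 2) →ₗ[F] A F a)
    (hf : f ∘ₗ Fchain F q qm (a + 2) = 0) (k : ℕ) :
    cext F f k ∘ₗ Fchain F q qm (a + 2 + k) = 0 := by
  induction k with
  | zero => exact hf
  | succ k ih =>
    change (cext F f k).rTensor (V F) ∘ₗ Fchain F q qm (a + 2 + k + 1) = 0
    rw [Fchain_succ']
    erw [← LinearMap.comp_assoc, ← LinearMap.rTensor_comp, ih, LinearMap.rTensor_zero,
      LinearMap.zero_comp]

/-- Here `i = m + 1` and `n = m + 2 + k`, so that `cext F (ev2 F q (A F m)) k` is `cup_i`. -/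
theorem stmt18 (m k : ℕ) :
    (cext F (ev2 F q (A F m)) k).comp (P F q qm (m + 2 + k)) = 0 := by
  rw [P, LinearMap.comp_smul, ← LinearMap.comp_assoc,
    cext_comp_Fchain_eq_zero F q qm _ (ev2_comp_Fchain F q qm m) k, LinearMap.zero_comp,
    smul_zero]

end
end
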